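/- arXiv:2007.06628 — 2 statements merged into one kernel-verified Lean document; each statement's English description precedes it below -/
import Mathlib

section
/- Let A be SPD with entrywise absolute value |A|, and suppose |Δ| ≤ ε|A| entrywise with Δ symmetric, where κ̲(A)·ε < 1 and κ̲(A) = ‖|A|‖·‖A^{-1}‖. Then A + Δ is symmetric positive definite. -/
open Matrix

noncomputable def opNorm {n m : ℕ} (A : Matrix (Fin n) (Fin m) ℝ) : ℝ :=
  ‖LinearMap.toContinuousLinearMap (Matrix.toEuclideanLin A)‖

noncomputable def vnorm {n : ℕ} (x : Fin n → ℝ) : ℝ := Real.sqrt (∑ i, x i ^ 2)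

noncomputable def enorm {n : ℕ} (A : Matrix (Fin n) (Fin n) ℝ) (x : Fin n → ℝ) : ℝ :=
  Real.sqrt (x ⬝ᵥ A.mulVec x)

/-! For `x ≠ 0`, Cauchy–Schwarz for the form `A` at `x` and `A⁻¹ x` gives
`xᵀx ≤ ‖A⁻¹‖ · xᵀAx`, while the entrywise bound gives `|xᵀΔx| ≤ ε · |x|ᵀ|A||x| ≤ ε ‖|A|‖ · xᵀx`.
Together `|xᵀΔx| ≤ κ̲(A) ε · xᵀAx < xᵀAx`, so `xᵀ(A + Δ)x > 0`. -/

namespace Matrix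

lemma dotProduct_mulVec_le_opNorm_mul {n : ℕ} (M : Matrix (Fin n) (Fin n) ℝ) (x : Fin n → ℝ) :
    x ⬝ᵥ M *ᵥ x ≤ opNorm M * (x ⬝ᵥ x) := by
  set e : EuclideanSpace ℝ (Fin n) := WithLp.toLp 2 x
  have hnorm : x ⬝ᵥ x = ‖e‖ ^ 2 := by
    rw [EuclideanSpace.real_norm_sq_eq]
    simp [e, dotProduct, sq]
  calc x ⬝ᵥ M *ᵥ x = inner ℝ e (toEuclideanLin M e) := by
        simp [e, PiLp.inner_apply, dotProduct, mul_comm]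
    _ ≤ ‖e‖ * ‖toEuclideanLin M e‖ := real_inner_le_norm _ _
    _ ≤ ‖e‖ * (opNorm M * ‖e‖) := by
      gcongr
      exact (LinearMap.toContinuousLinearMap (toEuclideanLin M)).le_opNorm e
    _ = opNorm M * (x ⬝ᵥ x) := by rw [hnorm]; ring

lemma abs_dotProduct_mulVec_le_of_abs_le {m n : Type*} [Fintype m] [Fintype n]
    {Δ B : Matrix m n ℝ} (hΔB : ∀ i j, |Δ i j| ≤ B i j) (x : m → ℝ) (y : n → ℝ) :
    |x ⬝ᵥ Δ *ᵥ y| ≤ |x| ⬝ᵥ B *ᵥ |y| := by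
  simp only [dotProduct, mulVec, Finset.mul_sum, Pi.abs_apply]
  refine (Finset.abs_sum_le_sum_abs _ _).trans <| Finset.sum_le_sum fun i _ ↦
    (Finset.abs_sum_le_sum_abs _ _).trans <| Finset.sum_le_sum fun j _ ↦ ?_
  rw [abs_mul, abs_mul]
  gcongr
  exact hΔB i j

lemma PosDef.dotProduct_self_le_opNorm_inv_mul {n : ℕ} {A : Matrix (Fin n) (Fin n) ℝ}
    (hA : A.PosDef) (x : Fin n → ℝ) : x ⬝ᵥ x ≤ opNorm A⁻¹ * (x ⬝ᵥ A *ᵥ x) := by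
  set y := A⁻¹ *ᵥ x
  have hAy : A *ᵥ y = x := by
    rw [mulVec_mulVec, mul_nonsing_inv _ (isUnit_iff_ne_zero.mpr hA.det_pos.ne'), one_mulVec]
  have hyA : y ⬝ᵥ A *ᵥ x = x ⬝ᵥ x := by
    rw [dotProduct_mulVec, ← mulVec_transpose, (isHermitian_iff_isSymm.mp hA.isHermitian).eq, hAy]
  have hCS := (toBilin' A).apply_mul_apply_le_of_forall_zero_le
    (fun v ↦ by simpa [toBilin'_apply'] using hA.posSemidef.dotProduct_mulVec_nonneg v) x y
  simp only [toBilin'_apply', hAy, hyA] at hCS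
  have hxAx : 0 ≤ x ⬝ᵥ A *ᵥ x := by simpa using hA.posSemidef.dotProduct_mulVec_nonneg x
  have hsq : (x ⬝ᵥ x) * (x ⬝ᵥ x) ≤ opNorm A⁻¹ * (x ⬝ᵥ A *ᵥ x) * (x ⬝ᵥ x) := calc
    _ ≤ (x ⬝ᵥ A *ᵥ x) * (x ⬝ᵥ A⁻¹ *ᵥ x) := by rwa [dotProduct_comm y] at hCS
    _ ≤ (x ⬝ᵥ A *ᵥ x) * (opNorm A⁻¹ * (x ⬝ᵥ x)) := by
      gcongr
      exact dotProduct_mulVec_le_opNorm_mul A⁻¹ x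
    _ = opNorm A⁻¹ * (x ⬝ᵥ A *ᵥ x) * (x ⬝ᵥ x) := by ring
  rcases (show 0 ≤ x ⬝ᵥ x by simpa using dotProduct_self_star_nonneg x).eq_or_lt with h0 | hpos
  · rw [← h0]
    exact mul_nonneg (norm_nonneg _) hxAx
  · exact le_of_mul_le_mul_right hsq hpos

lemma PosDef.add_of_abs_dotProduct_mulVec_le {n : ℕ} {A Δ : Matrix (Fin n) (Fin n) ℝ}
    (hA : A.PosDef) (hΔ : Δ.IsHermitian) {c : ℝ} (hc : opNorm A⁻¹ * c < 1)
    (hbound : ∀ x, |x ⬝ᵥ Δ *ᵥ x| ≤ c * (x ⬝ᵥ x)) : (A + Δ).PosDef := by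
  refine .of_dotProduct_mulVec_pos (hA.isHermitian.add hΔ) fun x hx ↦ ?_
  have hxx : 0 < x ⬝ᵥ x := by simpa using dotProduct_self_star_pos_iff.mpr hx
  have hxAx : 0 < x ⬝ᵥ A *ᵥ x := by simpa using hA.dotProduct_mulVec_pos hx
  have hc0 : 0 ≤ c := nonneg_of_mul_nonneg_left ((abs_nonneg _).trans (hbound x)) hxx
  have hpert : |x ⬝ᵥ Δ *ᵥ x| < x ⬝ᵥ A *ᵥ x := calc
    |x ⬝ᵥ Δ *ᵥ x| ≤ c * (x ⬝ᵥ x) := hbound x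
    _ ≤ c * (opNorm A⁻¹ * (x ⬝ᵥ A *ᵥ x)) := by
      gcongr
      exact hA.dotProduct_self_le_opNorm_inv_mul x
    _ = (opNorm A⁻¹ * c) * (x ⬝ᵥ A *ᵥ x) := by ring
    _ < x ⬝ᵥ A *ᵥ x := mul_lt_of_lt_one_left hxAx hc
  simp only [star_trivial, add_mulVec, dotProduct_add]
  linarith [neg_abs_le (x ⬝ᵥ Δ *ᵥ x)]

end Matrix

/-- entrywise quantization |Δ| ≤ ε|A| with κ̲(A)·ε < 1 keeps A + Δ SPD,
where κ̲(A) = ‖|A|‖·‖A⁻¹‖. -/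
theorem posDef_of_entrywise_quantization {n : ℕ}
    (A Δ : Matrix (Fin n) (Fin n) ℝ) (ε : ℝ)
    (hA : A.PosDef) (hΔ : Δ.IsSymm)
    (hdom : ∀ i j, |Δ i j| ≤ ε * |A i j|)
    (hκ : opNorm (A.map (fun a => |a|)) * opNorm A⁻¹ * ε < 1) :
    (A + Δ).PosDef := by
  rcases lt_or_ge ε 0 with hε | hε
  · have hΔ0 : Δ = 0 := by
      ext i j
      exact abs_nonpos_iff.mp ((hdom i j).trans (mul_nonpos_of_nonpos_of_nonneg hε.le (abs_nonneg _)))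
    simpa [hΔ0] using hA
  set absA := A.map (fun a => |a|)
  refine hA.add_of_abs_dotProduct_mulVec_le (isHermitian_iff_isSymm.mpr hΔ)
    (c := ε * opNorm absA) (by linarith) fun x ↦ ?_
  have habs : |x| ⬝ᵥ |x| = x ⬝ᵥ x := by simp [dotProduct, abs_mul_abs_self]
  calc |x ⬝ᵥ Δ *ᵥ x| ≤ |x| ⬝ᵥ (ε • absA) *ᵥ |x| :=
        abs_dotProduct_mulVec_le_of_abs_le (by simpa [absA] using hdom) x x
    _ = ε * (|x| ⬝ᵥ absA *ᵥ |x|) := by rw [smul_mulVec, dotProduct_smul, smul_eq_mul]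
    _ ≤ ε * (opNorm absA * (x ⬝ᵥ x)) := by
      gcongr
      rw [← habs]
      exact dotProduct_mulVec_le_opNorm_mul absA |x|
    _ = ε * opNorm absA * (x ⬝ᵥ x) := by ring
end

section
/- (Quantization error bound, Theorem 4.1) Let A be an n×n SPD matrix, b ∈ ℝ^n, and let Δ (symmetric) and δ satisfy |Δ| ≤ ε|A| and |δ| ≤ ε|b| entrywise, with κ̲(A)·ε < 1 where κ̲(A) = ‖|A|‖·‖A^{-1}‖. Then A + Δ is SPD and ‖(A+Δ)^{-1}(b+δ) − A^{-1}b‖_A ≤ φ·ε·‖A^{-1}b‖_A, where φ = (κ̲(A) + κ(A)^{1/2})/(1 − κ̲(A)ε), κ(A) = ‖A‖·‖A^{-1}‖, and ‖x‖_A = ‖A^{1/2}x‖. -/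
open Matrix

/-
Write x = A⁻¹b and e = (A + Δ)⁻¹(b + δ) - x, so that (A + Δ)e = δ - Δx. The entrywise bounds give
‖Δ‖ ≤ ε‖|A|‖ and ‖δ‖ ≤ ε‖b‖. A symmetric square root S of A satisfies ‖S‖² = ‖A‖ and
‖S⁻¹‖² = ‖A⁻¹‖ (C⋆-identity), which converts Euclidean into energy norms:
‖y‖ ≤ ‖A⁻¹‖^{1/2}‖y‖_A and ‖Ay‖ ≤ ‖A‖^{1/2}‖y‖_A. Hence |y·Δz| ≤ ρ‖y‖_A‖z‖_A with ρ = κ̲(A)ε < 1,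
so A + Δ is coercive in the energy norm, and testing (A + Δ)e = δ - Δx against e gives
(1 - ρ)‖e‖_A² ≤ ‖e‖_A (ε κ(A)^{1/2} + ρ)‖x‖_A.
-/

section Euclidean

open scoped Matrix.Norms.L2Operator

variable {n m : ℕ}

theorem vnorm_eq_norm_toLp (x : Fin n → ℝ) : vnorm x = ‖WithLp.toLp 2 x‖ := by
  simp [vnorm, EuclideanSpace.norm_eq]

theorem vnorm_nonneg (x : Fin n → ℝ) : 0 ≤ vnorm x := Real.sqrt_nonneg _

theorem opNorm_eq_norm (M : Matrix (Fin n) (Fin m) ℝ) : opNorm M = ‖M‖ := rfl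

theorem opNorm_nonneg (M : Matrix (Fin n) (Fin m) ℝ) : 0 ≤ opNorm M := norm_nonneg _

theorem dotProduct_self_eq_vnorm_sq (x : Fin n → ℝ) : x ⬝ᵥ x = vnorm x ^ 2 := by
  rw [vnorm, Real.sq_sqrt (by positivity)]
  simp [dotProduct, sq]

theorem abs_dotProduct_le (x y : Fin n → ℝ) : |x ⬝ᵥ y| ≤ vnorm x * vnorm y := by
  rw [vnorm_eq_norm_toLp, vnorm_eq_norm_toLp]
  simpa [PiLp.inner_apply, dotProduct, mul_comm] using
    abs_real_inner_le_norm (WithLp.toLp 2 x) (WithLp.toLp 2 y)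

theorem vnorm_mulVec_le (M : Matrix (Fin n) (Fin m) ℝ) (x : Fin m → ℝ) :
    vnorm (M *ᵥ x) ≤ opNorm M * vnorm x := by
  rw [opNorm_eq_norm]
  simpa [vnorm_eq_norm_toLp] using M.l2_opNorm_mulVec (WithLp.toLp 2 x)

theorem opNorm_le_of_vnorm_mulVec_le (M : Matrix (Fin n) (Fin m) ℝ) {C : ℝ} (hC : 0 ≤ C)
    (h : ∀ x, vnorm (M *ᵥ x) ≤ C * vnorm x) : opNorm M ≤ C :=
  ContinuousLinearMap.opNorm_le_bound _ hC fun x => by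
    have hx := h x.ofLp
    rwa [vnorm_eq_norm_toLp, vnorm_eq_norm_toLp] at hx

theorem vnorm_le_vnorm_of_abs_le {x y : Fin n → ℝ} (h : ∀ i, |x i| ≤ |y i|) :
    vnorm x ≤ vnorm y :=
  Real.sqrt_le_sqrt (Finset.sum_le_sum fun i _ => sq_le_sq.mpr (h i))

theorem vnorm_smul (c : ℝ) (x : Fin n → ℝ) : vnorm (c • x) = |c| * vnorm x := by
  rw [vnorm_eq_norm_toLp, vnorm_eq_norm_toLp, WithLp.toLp_smul, norm_smul, Real.norm_eq_abs]

theorem vnorm_le_mul_of_abs_le {c : ℝ} (hc : 0 ≤ c) {x y : Fin n → ℝ}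
    (h : ∀ i, |x i| ≤ c * |y i|) : vnorm x ≤ c * vnorm y := by
  rw [← abs_of_nonneg hc, ← vnorm_smul]
  exact vnorm_le_vnorm_of_abs_le fun i => by simpa [abs_mul, abs_of_nonneg hc] using h i

theorem opNorm_smul (c : ℝ) (M : Matrix (Fin n) (Fin m) ℝ) : opNorm (c • M) = |c| * opNorm M :=
  norm_smul c M

theorem opNorm_le_opNorm_of_abs_le {M N : Matrix (Fin n) (Fin m) ℝ}
    (h : ∀ i j, |M i j| ≤ N i j) : opNorm M ≤ opNorm N := by
  refine opNorm_le_of_vnorm_mulVec_le M (opNorm_nonneg N) fun x => ?_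
  have hentry : ∀ i, |(M *ᵥ x) i| ≤ |(N *ᵥ fun j => |x j|) i| := fun i =>
    calc |(M *ᵥ x) i| ≤ ∑ j, |M i j| * |x j| := by
          simpa only [Matrix.mulVec, dotProduct, abs_mul] using
            Finset.abs_sum_le_sum_abs (fun j => M i j * x j) Finset.univ
      _ ≤ ∑ j, N i j * |x j| := by gcongr with j; exact h i j
      _ ≤ |(N *ᵥ fun j => |x j|) i| := le_abs_self _
  calc vnorm (M *ᵥ x) ≤ vnorm (N *ᵥ fun j => |x j|) := vnorm_le_vnorm_of_abs_le hentry
    _ ≤ opNorm N * vnorm (fun j => |x j|) := vnorm_mulVec_le N _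
    _ = opNorm N * vnorm x := by simp [vnorm, sq_abs]

theorem Matrix.IsSymm.opNorm_mul_self {S : Matrix (Fin n) (Fin n) ℝ} (hS : S.IsSymm) :
    opNorm (S * S) = opNorm S ^ 2 := by
  have := S.l2_opNorm_conjTranspose_mul_self
  rw [Matrix.conjTranspose_eq_transpose_of_trivial, hS.eq] at this
  rw [opNorm_eq_norm, opNorm_eq_norm, this, sq]

theorem opNorm_le_mul_opNorm_map_abs {M N : Matrix (Fin n) (Fin m) ℝ} {c : ℝ}
    (hc : 0 ≤ c) (h : ∀ i j, |M i j| ≤ c * |N i j|) :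
    opNorm M ≤ c * opNorm (N.map fun a => |a|) := by
  rw [← abs_of_nonneg hc, ← opNorm_smul]
  exact opNorm_le_opNorm_of_abs_le fun i j => by simpa [abs_of_nonneg hc] using h i j

end Euclidean

section EnergyNorm

variable {n : ℕ} {A : Matrix (Fin n) (Fin n) ℝ}

theorem enorm_nonneg (A : Matrix (Fin n) (Fin n) ℝ) (x : Fin n → ℝ) : 0 ≤ enorm A x :=
  Real.sqrt_nonneg _

theorem enorm_eq_vnorm_mulVec {S : Matrix (Fin n) (Fin n) ℝ} (hS : S.IsSymm) (hSA : S * S = A)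
    (x : Fin n → ℝ) : enorm A x = vnorm (S *ᵥ x) := by
  rw [_root_.enorm, ← hSA, ← mulVec_mulVec, dotProduct_mulVec, ← mulVec_transpose, hS.eq,
    dotProduct_self_eq_vnorm_sq, Real.sqrt_sq (vnorm_nonneg _)]

theorem Matrix.PosSemidef.exists_isSymm_mul_self_eq (hA : A.PosSemidef) :
    ∃ S : Matrix (Fin n) (Fin n) ℝ, S.IsSymm ∧ S * S = A := by
  open scoped MatrixOrder in
  exact ⟨CFC.sqrt A, isHermitian_iff_isSymm.mp (CFC.sqrt_nonneg A).posSemidef.isHermitian,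
    CFC.sqrt_mul_sqrt_self A hA.nonneg⟩

theorem Matrix.PosSemidef.sq_enorm (hA : A.PosSemidef) (x : Fin n → ℝ) :
    enorm A x ^ 2 = x ⬝ᵥ A *ᵥ x :=
  Real.sq_sqrt (by simpa using hA.dotProduct_mulVec_nonneg x)

theorem Matrix.PosSemidef.vnorm_mulVec_le_enorm (hA : A.PosSemidef) (x : Fin n → ℝ) :
    vnorm (A *ᵥ x) ≤ √(opNorm A) * enorm A x := by
  obtain ⟨S, hS, rfl⟩ := hA.exists_isSymm_mul_self_eq
  rw [enorm_eq_vnorm_mulVec hS rfl, hS.opNorm_mul_self, Real.sqrt_sq (opNorm_nonneg S),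
    ← mulVec_mulVec]
  exact vnorm_mulVec_le S _

theorem Matrix.PosDef.vnorm_le_enorm (hA : A.PosDef) (x : Fin n → ℝ) :
    vnorm x ≤ √(opNorm A⁻¹) * enorm A x := by
  obtain ⟨S, hS, hSA⟩ := hA.posSemidef.exists_isSymm_mul_self_eq
  have hSdet : IsUnit S.det := by
    rw [isUnit_iff_ne_zero, ← pow_ne_zero_iff two_ne_zero, sq, ← det_mul, hSA]
    exact hA.det_pos.ne'
  have hT : S⁻¹.IsSymm := by rw [IsSymm, transpose_nonsing_inv, hS.eq]
  have hTT : S⁻¹ * S⁻¹ = A⁻¹ := by rw [← hSA, mul_inv_rev]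
  calc vnorm x = vnorm (S⁻¹ *ᵥ (S *ᵥ x)) := by
        rw [mulVec_mulVec, nonsing_inv_mul _ hSdet, one_mulVec]
    _ ≤ opNorm S⁻¹ * vnorm (S *ᵥ x) := vnorm_mulVec_le _ _
    _ = √(opNorm A⁻¹) * enorm A x := by
        rw [← hTT, hT.opNorm_mul_self, Real.sqrt_sq (opNorm_nonneg _),
          enorm_eq_vnorm_mulVec hS hSA]

end EnergyNorm

section Perturbation

variable {n : ℕ} {A Δ : Matrix (Fin n) (Fin n) ℝ}

theorem Matrix.PosDef.abs_dotProduct_mulVec_le (hA : A.PosDef) (M : Matrix (Fin n) (Fin n) ℝ)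
    (y x : Fin n → ℝ) :
    |y ⬝ᵥ M *ᵥ x| ≤ opNorm M * opNorm A⁻¹ * (enorm A y * enorm A x) := by
  have hκ : √(opNorm A⁻¹) * √(opNorm A⁻¹) = opNorm A⁻¹ := Real.mul_self_sqrt (opNorm_nonneg _)
  calc |y ⬝ᵥ M *ᵥ x| ≤ vnorm y * (opNorm M * vnorm x) :=
        (abs_dotProduct_le _ _).trans (by gcongr; exacts [vnorm_nonneg _, vnorm_mulVec_le M x])
    _ ≤ (√(opNorm A⁻¹) * enorm A y) * (opNorm M * (√(opNorm A⁻¹) * enorm A x)) := by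
        refine mul_le_mul (hA.vnorm_le_enorm y) ?_ (mul_nonneg (opNorm_nonneg M) (vnorm_nonneg x))
          (mul_nonneg (Real.sqrt_nonneg _) (enorm_nonneg A y))
        exact mul_le_mul_of_nonneg_left (hA.vnorm_le_enorm x) (opNorm_nonneg M)
    _ = opNorm M * opNorm A⁻¹ * (enorm A y * enorm A x) := by
        linear_combination (opNorm M * (enorm A y * enorm A x)) * hκ

theorem Matrix.PosDef.mul_sq_enorm_le_dotProduct_add_mulVec (hA : A.PosDef)
    (Δ : Matrix (Fin n) (Fin n) ℝ) (x : Fin n → ℝ) :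
    (1 - opNorm Δ * opNorm A⁻¹) * enorm A x ^ 2 ≤ x ⬝ᵥ (A + Δ) *ᵥ x := by
  have hΔx := (abs_le.mp (hA.abs_dotProduct_mulVec_le Δ x x)).1
  rw [add_mulVec, dotProduct_add, ← hA.posSemidef.sq_enorm]
  linarith

theorem Matrix.PosDef.dotProduct_add_mulVec_pos (hA : A.PosDef)
    (hΔA : opNorm Δ * opNorm A⁻¹ < 1) {x : Fin n → ℝ} (hx : x ≠ 0) :
    0 < x ⬝ᵥ (A + Δ) *ᵥ x := by
  have hAx : 0 < enorm A x ^ 2 := by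
    simpa [hA.posSemidef.sq_enorm] using hA.dotProduct_mulVec_pos hx
  exact (mul_pos (sub_pos.mpr hΔA) hAx).trans_le (hA.mul_sq_enorm_le_dotProduct_add_mulVec Δ x)

theorem Matrix.PosDef.isUnit_add (hA : A.PosDef) (hΔA : opNorm Δ * opNorm A⁻¹ < 1) :
    IsUnit (A + Δ) := by
  refine mulVec_injective_iff_isUnit.mp fun x y hxy => by_contra fun hne => ?_
  have hpos := hA.dotProduct_add_mulVec_pos hΔA (sub_ne_zero.mpr hne)
  rw [mulVec_sub, hxy, sub_self, dotProduct_zero] at hpos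
  exact hpos.false

theorem Matrix.PosDef.add_of_opNorm_mul_opNorm_inv_lt_one (hA : A.PosDef) (hΔ : Δ.IsSymm)
    (hΔA : opNorm Δ * opNorm A⁻¹ < 1) : (A + Δ).PosDef :=
  .of_dotProduct_mulVec_pos (hA.isHermitian.add (isHermitian_iff_isSymm.mpr hΔ))
    fun x hx => by simpa using hA.dotProduct_add_mulVec_pos hΔA hx

theorem Matrix.PosDef.mul_enorm_inv_add_mulVec_sub_le (hA : A.PosDef)
    (hΔA : opNorm Δ * opNorm A⁻¹ < 1) {b δ : Fin n → ℝ} {ε : ℝ} (hε : 0 ≤ ε) (hδ : vnorm δ ≤ ε * vnorm b) :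
    (1 - opNorm Δ * opNorm A⁻¹) * enorm A ((A + Δ)⁻¹ *ᵥ (b + δ) - A⁻¹ *ᵥ b) ≤
      (ε * √(opNorm A * opNorm A⁻¹) + opNorm Δ * opNorm A⁻¹) * enorm A (A⁻¹ *ᵥ b) := by
  set x := A⁻¹ *ᵥ b
  set e := (A + Δ)⁻¹ *ᵥ (b + δ) - x
  set K := (ε * √(opNorm A * opNorm A⁻¹) + opNorm Δ * opNorm A⁻¹) * enorm A x
  have hAx : A *ᵥ x = b := by
    rw [mulVec_mulVec, mul_nonsing_inv _ ((isUnit_iff_isUnit_det A).mp hA.isUnit), one_mulVec]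
  have hAΔ : IsUnit (A + Δ).det :=
    (isUnit_iff_isUnit_det _).mp (hA.isUnit_add hΔA)
  have he : (A + Δ) *ᵥ e = δ - Δ *ᵥ x := by
    rw [mulVec_sub, mulVec_mulVec, mul_nonsing_inv _ hAΔ, one_mulVec, add_mulVec, hAx]
    abel
  have hcoercive := hA.mul_sq_enorm_le_dotProduct_add_mulVec Δ e
  have hδb : |e ⬝ᵥ δ| ≤ ε * √(opNorm A * opNorm A⁻¹) * (enorm A e * enorm A x) :=
    calc |e ⬝ᵥ δ| ≤ (√(opNorm A⁻¹) * enorm A e) * (ε * (√(opNorm A) * enorm A x)) := by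
          have hb : vnorm b ≤ √(opNorm A) * enorm A x := hAx ▸ hA.posSemidef.vnorm_mulVec_le_enorm x
          exact (abs_dotProduct_le e δ).trans (mul_le_mul (hA.vnorm_le_enorm e)
            (hδ.trans (mul_le_mul_of_nonneg_left hb hε)) (vnorm_nonneg δ)
            (mul_nonneg (Real.sqrt_nonneg _) (enorm_nonneg A e)))
      _ = ε * √(opNorm A * opNorm A⁻¹) * (enorm A e * enorm A x) := by
          rw [Real.sqrt_mul (opNorm_nonneg A)]
          ring
  have hΔx := hA.abs_dotProduct_mulVec_le Δ e x
  have hsq : (1 - opNorm Δ * opNorm A⁻¹) * enorm A e * enorm A e ≤ K * enorm A e := by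
    rw [he, dotProduct_sub] at hcoercive
    linarith [le_abs_self (e ⬝ᵥ δ), neg_abs_le (e ⬝ᵥ Δ *ᵥ x)]
  have hK : 0 ≤ K := mul_nonneg (add_nonneg (mul_nonneg hε (Real.sqrt_nonneg _))
    (mul_nonneg (opNorm_nonneg Δ) (opNorm_nonneg _))) (enorm_nonneg A x)
  rcases (enorm_nonneg A e).eq_or_lt with he0 | he0
  · rwa [← he0, mul_zero]
  · exact le_of_mul_le_mul_right hsq he0

end Perturbation

/-- Theorem 4.1: quantization error bound for the solution, in the
energy norm ‖x‖_A. -/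
theorem quantization_error_bound {n : ℕ}
    (A Δ : Matrix (Fin n) (Fin n) ℝ) (b δ : Fin n → ℝ) (ε : ℝ)
    (hA : A.PosDef) (hΔ : Δ.IsSymm)
    (hΔdom : ∀ i j, |Δ i j| ≤ ε * |A i j|)
    (hδdom : ∀ i, |δ i| ≤ ε * |b i|)
    (hκ : opNorm (A.map (fun a => |a|)) * opNorm A⁻¹ * ε < 1) :
    (A + Δ).PosDef ∧
    enorm A ((A + Δ)⁻¹ *ᵥ (b + δ) - A⁻¹ *ᵥ b) ≤
      ((opNorm (A.map (fun a => |a|)) * opNorm A⁻¹ + Real.sqrt (opNorm A * opNorm A⁻¹)) /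
        (1 - opNorm (A.map (fun a => |a|)) * opNorm A⁻¹ * ε)) * ε *
      enorm A (A⁻¹ *ᵥ b) := by
  rcases isEmpty_or_nonempty (Fin n) with hn | ⟨⟨i⟩⟩
  · have hvec : ∀ x : Fin n → ℝ, x = 0 := fun x => Subsingleton.elim x 0
    refine ⟨Subsingleton.elim A (A + Δ) ▸ hA, ?_⟩
    simp [hvec (_ - _), _root_.enorm]
  have hε : 0 ≤ ε := nonneg_of_mul_nonneg_left ((abs_nonneg _).trans (hΔdom i i))
    (abs_pos.mpr hA.diag_pos.ne')
  set κ := opNorm (A.map fun a => |a|) * opNorm A⁻¹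
  set E := enorm A ((A + Δ)⁻¹ *ᵥ (b + δ) - A⁻¹ *ᵥ b)
  set X := enorm A (A⁻¹ *ᵥ b)
  have hΔκ : opNorm Δ * opNorm A⁻¹ ≤ κ * ε :=
    calc opNorm Δ * opNorm A⁻¹ ≤ ε * opNorm (A.map fun a => |a|) * opNorm A⁻¹ := by
          gcongr
          exacts [opNorm_nonneg _, opNorm_le_mul_opNorm_map_abs hε hΔdom]
      _ = κ * ε := by ring
  refine ⟨hA.add_of_opNorm_mul_opNorm_inv_lt_one hΔ (hΔκ.trans_lt hκ), ?_⟩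
  rw [div_mul_eq_mul_div, div_mul_eq_mul_div, le_div_iff₀ (sub_pos.mpr hκ), mul_comm]
  calc (1 - κ * ε) * E ≤ (1 - opNorm Δ * opNorm A⁻¹) * E := by
        gcongr
        exact enorm_nonneg A _
    _ ≤ (ε * √(opNorm A * opNorm A⁻¹) + opNorm Δ * opNorm A⁻¹) * X :=
        hA.mul_enorm_inv_add_mulVec_sub_le (hΔκ.trans_lt hκ) hε (vnorm_le_mul_of_abs_le hε hδdom)
    _ ≤ (ε * √(opNorm A * opNorm A⁻¹) + κ * ε) * X := by
        gcongr
        exact enorm_nonneg A _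
    _ = (κ + √(opNorm A * opNorm A⁻¹)) * ε * X := by ring
end
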